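/- arXiv:2605.06038 — 3 statements merged into one kernel-verified Lean document; each statement's English description precedes it below -/
import Mathlib

section
/- Let N ∈ {2,3}, p > 1, and ω ≥ 0. Let φ : (0,∞) → ℝ be twice continuously differentiable with φ(r) > 0 for all r > 0, φ(r) → 0 as r → ∞, and φ''(r) + ((N−1)/r) φ'(r) − ω φ(r) − φ(r)^p = 0 for all r > 0. Then φ'(r) < 0 for all r > 0; in particular φ is strictly decreasing. -/
noncomputable section
open Real Filter Topology

/-- a positive radial profile `φ` of the defocusing stationary equation,
i.e. a positive C² solution of `φ'' + ((N−1)/r)φ' − ωφ − φ^p = 0` on `(0,∞)` vanishing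
at infinity, has strictly negative derivative: `φ'(r) < 0` for all `r > 0`. -/
theorem radial_profile_strictly_decreasing (N : ℕ) (hN : N = 2 ∨ N = 3)
    (p ω : ℝ) (hp : 1 < p) (hω : 0 ≤ ω)
    (φ : ℝ → ℝ)
    (hC2 : ContDiffOn ℝ 2 φ (Set.Ioi (0 : ℝ)))
    (hpos : ∀ r > (0:ℝ), 0 < φ r)
    (hlim : Tendsto φ atTop (𝓝 0))
    (hode : ∀ r > (0:ℝ),
      deriv (deriv φ) r + ((N - 1 : ℝ) / r) * deriv φ r - ω * φ r - φ r ^ p = 0) :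
    ∀ r > (0:ℝ), deriv φ r < 0 := by
  intro r₀ hr₀
  by_contra hcon
  push_neg at hcon
  set n : ℝ := (N : ℝ) - 1 with hn_def
  have hn1 : 1 ≤ n := by rcases hN with h | h <;> simp [hn_def, h] <;> norm_num
  have hn0 : 0 < n := lt_of_lt_of_le one_pos hn1
  -- differentiability facts
  have hd0 : DifferentiableOn ℝ φ (Set.Ioi (0:ℝ)) := hC2.differentiableOn (by norm_num)
  have hd1 : DifferentiableOn ℝ (deriv φ) (Set.Ioi (0:ℝ)) :=
    (hC2.deriv_of_isOpen (m := 1) isOpen_Ioi (by norm_num)).differentiableOn (by norm_num)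
  have hφ'' : ∀ x > (0:ℝ), HasDerivAt (deriv φ) (deriv (deriv φ) x) x := fun x hx =>
    ((hd1.differentiableAt (isOpen_Ioi.mem_nhds hx))).hasDerivAt
  set g : ℝ → ℝ := fun x => x ^ n * deriv φ x with hg_def
  have hgderiv : ∀ x > (0:ℝ), HasDerivAt g (x ^ n * (ω * φ x + φ x ^ p)) x := by
    intro x hx
    have h1 : HasDerivAt (fun y : ℝ => y ^ n) (n * x ^ (n - 1)) x :=
      Real.hasDerivAt_rpow_const (Or.inl (ne_of_gt hx))
    have h2 : HasDerivAt g (n * x ^ (n - 1) * deriv φ x + x ^ n * deriv (deriv φ) x) x :=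
      (h1.mul (hφ'' x hx))
    convert h2 using 1
    have hode' := hode x hx
    have hr : x ^ (n - 1) = x ^ n / x := by
      rw [Real.rpow_sub hx, Real.rpow_one]
    have hdd : deriv (deriv φ) x = ω * φ x + φ x ^ p - (n / x) * deriv φ x := by
      linarith
    rw [hdd, hr]
    field_simp
    ring
  -- g is strictly increasing on [r₀, ∞)
  have hIci : Set.Ici r₀ ⊆ Set.Ioi (0:ℝ) := fun x hx => lt_of_lt_of_le hr₀ hx
  have hgmono : StrictMonoOn g (Set.Ici r₀) := by
    apply strictMonoOn_of_deriv_pos (convex_Ici r₀)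
    · intro x hx
      exact ((hgderiv x (hIci hx)).differentiableAt).continuousAt.continuousWithinAt
    · intro x hx
      rw [interior_Ici] at hx
      have hx0 : 0 < x := hr₀.trans hx
      rw [(hgderiv x hx0).deriv]
      have h1 : 0 < x ^ n := Real.rpow_pos_of_pos hx0 n
      have h2 : 0 < φ x := hpos x hx0
      have h3 : 0 < φ x ^ p := Real.rpow_pos_of_pos h2 p
      have h4 : 0 ≤ ω * φ x := mul_nonneg hω h2.le
      positivity
  -- hence deriv φ > 0 on (r₀, ∞)
  have hdpos : ∀ x, r₀ < x → 0 < deriv φ x := by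
    intro x hx
    have hx0 : 0 < x := hr₀.trans hx
    have hg0 : g r₀ < g x := hgmono Set.self_mem_Ici (le_of_lt hx) hx
    have hgr₀ : 0 ≤ g r₀ := mul_nonneg (Real.rpow_pos_of_pos hr₀ n).le hcon
    have hgx : 0 < g x := lt_of_le_of_lt hgr₀ hg0
    have hxn : 0 < x ^ n := Real.rpow_pos_of_pos hx0 n
    by_contra hd
    push_neg at hd
    have : g x ≤ 0 := mul_nonpos_of_nonneg_of_nonpos hxn.le hd
    linarith
  -- φ strictly increasing on [r₀, ∞)
  have hmono : StrictMonoOn φ (Set.Ici r₀) := by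
    apply strictMonoOn_of_deriv_pos (convex_Ici r₀)
    · exact (hd0.continuousOn).mono hIci
    · intro x hx
      rw [interior_Ici] at hx
      exact hdpos x hx
  have hb : 0 < φ (r₀ + 1) := hpos _ (by linarith)
  have hev : ∀ᶠ x in atTop, φ x < φ (r₀ + 1) := hlim.eventually_lt_const hb
  obtain ⟨x, hx1, hx2⟩ := (hev.and (eventually_ge_atTop (r₀ + 2))).exists
  have : φ (r₀ + 1) < φ x :=
    hmono (Set.mem_Ici.mpr (by linarith)) (Set.mem_Ici.mpr (by linarith)) (by linarith)
  linarith
end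
end

section
/- Let N ∈ {2,3}, p > 1, and 0 < ε ≤ 1. Let u, v : [1,∞) → ℝ be twice continuously differentiable, with u(r) > 0 and v(r) > 0 for all r ≥ 1, u(r) → 0 and v(r) → 0 as r → ∞, satisfying u''(r) + ((N−1)/r) u'(r) − u(r)^p = 0 and v''(r) + ((N−1)/r) v'(r) − ε^{1−p} v(r)^p = 0 for all r > 1, and u(1) ≥ v(1). Then u(r) ≥ v(r) for all r ∈ [1,∞). -/
noncomputable section
open Real Filter Topology

/-- comparison lemma for the radial zero-mass defocusing ODE. If `u`
solves `u'' + ((N−1)/r)u' − u^p = 0` and `v` solves the more defocusing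
`v'' + ((N−1)/r)v' − ε^{1−p} v^p = 0` on `(1,∞)` (`0 < ε ≤ 1`), both positive C²
functions on `[1,∞)` vanishing at infinity, and `u(1) ≥ v(1)`, then `u ≥ v` on `[1,∞)`. -/
theorem radial_comparison (N : ℕ) (hN : N = 2 ∨ N = 3)
    (p ε : ℝ) (hp : 1 < p) (hε0 : 0 < ε) (hε1 : ε ≤ 1)
    (u v : ℝ → ℝ)
    (huC2 : ContDiffOn ℝ 2 u (Set.Ici (1 : ℝ)))
    (hvC2 : ContDiffOn ℝ 2 v (Set.Ici (1 : ℝ)))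
    (hupos : ∀ r ≥ (1:ℝ), 0 < u r) (hvpos : ∀ r ≥ (1:ℝ), 0 < v r)
    (hulim : Tendsto u atTop (𝓝 0)) (hvlim : Tendsto v atTop (𝓝 0))
    (huode : ∀ r > (1:ℝ),
      deriv (deriv u) r + ((N - 1 : ℝ) / r) * deriv u r - u r ^ p = 0)
    (hvode : ∀ r > (1:ℝ),
      deriv (deriv v) r + ((N - 1 : ℝ) / r) * deriv v r - ε ^ (1 - p) * v r ^ p = 0)
    (h1 : v 1 ≤ u 1) :
    ∀ r ≥ (1:ℝ), v r ≤ u r := by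
  set w : ℝ → ℝ := fun r => u r - v r with hw
  -- continuity of w on [1,∞)
  have hwcont : ContinuousOn w (Set.Ici (1:ℝ)) :=
    (huC2.continuousOn).sub (hvC2.continuousOn)
  -- C² on the open set (1,∞)
  have huO : ContDiffOn ℝ 2 u (Set.Ioi (1:ℝ)) := huC2.mono Set.Ioi_subset_Ici_self
  have hvO : ContDiffOn ℝ 2 v (Set.Ioi (1:ℝ)) := hvC2.mono Set.Ioi_subset_Ici_self
  have hopen : IsOpen (Set.Ioi (1:ℝ)) := isOpen_Ioi
  have hud : ∀ x ∈ Set.Ioi (1:ℝ), DifferentiableAt ℝ u x := by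
    intro x hx
    exact ((huO.differentiableOn (by norm_num)).differentiableAt (hopen.mem_nhds hx))
  have hvd : ∀ x ∈ Set.Ioi (1:ℝ), DifferentiableAt ℝ v x := by
    intro x hx
    exact ((hvO.differentiableOn (by norm_num)).differentiableAt (hopen.mem_nhds hx))
  have hu'C : ContDiffOn ℝ 1 (deriv u) (Set.Ioi (1:ℝ)) :=
    huO.deriv_of_isOpen hopen (by norm_num)
  have hv'C : ContDiffOn ℝ 1 (deriv v) (Set.Ioi (1:ℝ)) :=
    hvO.deriv_of_isOpen hopen (by norm_num)
  have hu'd : ∀ x ∈ Set.Ioi (1:ℝ), DifferentiableAt ℝ (deriv u) x := by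
    intro x hx
    exact ((hu'C.differentiableOn (by norm_num)).differentiableAt (hopen.mem_nhds hx))
  have hv'd : ∀ x ∈ Set.Ioi (1:ℝ), DifferentiableAt ℝ (deriv v) x := by
    intro x hx
    exact ((hv'C.differentiableOn (by norm_num)).differentiableAt (hopen.mem_nhds hx))
  -- derivative of w on (1,∞)
  have hdw : ∀ x ∈ Set.Ioi (1:ℝ), deriv w x = deriv u x - deriv v x := by
    intro x hx
    exact deriv_sub (hud x hx) (hvd x hx)
  -- main argument by contradiction
  by_contra hcon
  push_neg at hcon
  obtain ⟨r₁, hr₁1, hr₁⟩ := hcon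
  have hwr₁ : w r₁ < 0 := by simpa [hw] using sub_neg.2 hr₁
  -- w tends to 0 at infinity
  have hwlim : Tendsto w atTop (𝓝 0) := by
    simpa using hulim.sub hvlim
  -- choose R beyond which w > w r₁ / 2
  have hev : ∀ᶠ r in atTop, w r₁ / 2 < w r :=
    hwlim.eventually (eventually_gt_nhds (by linarith))
  obtain ⟨R₀, hR₀⟩ := eventually_atTop.1 hev
  set R : ℝ := max R₀ (max r₁ 2) with hR
  have hRr₁ : r₁ ≤ R := le_trans (le_max_left _ _) (le_max_right _ _)
  have hR1 : (1:ℝ) < R := lt_of_lt_of_le one_lt_two (le_trans (le_max_right _ _) (le_max_right _ _))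
  have hRbig : ∀ r ≥ R, w r₁ / 2 < w r := fun r hr => hR₀ r (le_trans (le_max_left _ _) hr)
  -- minimum of w on [1, R]
  obtain ⟨r₀, hr₀mem, hr₀min⟩ := isCompact_Icc.exists_isMinOn (Set.nonempty_Icc.2 hR1.le)
    (hwcont.mono (by intro x hx; exact hx.1))
  have hr₀min' : ∀ x ∈ Set.Icc (1:ℝ) R, w r₀ ≤ w x := fun x hx => hr₀min hx
  have hwr₀ : w r₀ < 0 := lt_of_le_of_lt (hr₀min' r₁ ⟨hr₁1, hRr₁⟩) hwr₁
  -- global minimum on [1,∞)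
  have hglob : ∀ x ≥ (1:ℝ), w r₀ ≤ w x := by
    intro x hx
    rcases le_or_gt x R with h | h
    · exact hr₀min' x ⟨hx, h⟩
    · have := hRbig x h.le
      have : w r₁ / 2 < w x := this
      have h2 : w r₀ ≤ w r₁ := hr₀min' r₁ ⟨hr₁1, hRr₁⟩
      have h3 : w r₁ ≤ w r₁ / 2 := by linarith
      exact le_trans h2 (le_trans h3 this.le)
  -- r₀ is interior: r₀ > 1 and r₀ < R
  have hw1 : 0 ≤ w 1 := sub_nonneg.2 h1
  have hr₀gt : (1:ℝ) < r₀ := by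
    rcases lt_or_eq_of_le hr₀mem.1 with h | h
    · exact h
    · exfalso; rw [← h] at hwr₀; linarith
  have hr₀Ioi : r₀ ∈ Set.Ioi (1:ℝ) := hr₀gt
  -- local min
  have hloc : IsLocalMin w r₀ := by
    filter_upwards [Ioi_mem_nhds hr₀gt] with x hx
    exact hglob x (le_of_lt hx)
  have hw'0 : deriv w r₀ = 0 := hloc.deriv_eq_zero
  have hw'eq : deriv u r₀ - deriv v r₀ = 0 := by rw [← hdw r₀ hr₀Ioi]; exact hw'0
  -- second derivative computation
  have hevEq : deriv w =ᶠ[𝓝 r₀] fun x => deriv u x - deriv v x := by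
    filter_upwards [hopen.mem_nhds hr₀Ioi] with x hx
    exact hdw x hx
  have hdd : deriv (deriv w) r₀ = deriv (deriv u) r₀ - deriv (deriv v) r₀ := by
    rw [hevEq.deriv_eq]
    exact deriv_sub (hu'd r₀ hr₀Ioi) (hv'd r₀ hr₀Ioi)
  -- use the ODEs
  have hueq := huode r₀ hr₀gt
  have hveq := hvode r₀ hr₀gt
  -- w'' r₀ = u^p - ε^{1-p} v^p  (using w' r₀ = 0)
  have hdd2 : deriv (deriv w) r₀ = u r₀ ^ p - ε ^ (1 - p) * v r₀ ^ p := by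
    have hcd : ((N - 1 : ℝ) / r₀) * (deriv u r₀ - deriv v r₀) = 0 := by
      rw [hw'eq]; ring
    rw [hdd]
    nlinarith [hueq, hveq, hcd]
  -- sign: u r₀ < v r₀, so u^p < v^p ≤ ε^{1-p} v^p
  have huv : u r₀ < v r₀ := by have := hwr₀; simp only [hw] at this; linarith
  have hup : u r₀ ^ p < v r₀ ^ p :=
    Real.rpow_lt_rpow (hupos r₀ hr₀gt.le).le huv (by linarith)
  have hε' : (1:ℝ) ≤ ε ^ (1 - p) :=
    Real.one_le_rpow_of_pos_of_le_one_of_nonpos hε0 hε1 (by linarith)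
  have hvp : v r₀ ^ p ≤ ε ^ (1 - p) * v r₀ ^ p := by
    nlinarith [Real.rpow_nonneg (hvpos r₀ hr₀gt.le).le p]
  have hw'' : deriv (deriv w) r₀ < 0 := by rw [hdd2]; linarith
  -- deriv w is differentiable at r₀
  have hdwdiff : DifferentiableAt ℝ (deriv w) r₀ := by
    have : DifferentiableAt ℝ (fun x => deriv u x - deriv v x) r₀ :=
      (hu'd r₀ hr₀Ioi).sub (hv'd r₀ hr₀Ioi)
    exact this.congr_of_eventuallyEq hevEq
  have hHD : HasDerivAt (deriv w) (deriv (deriv w) r₀) r₀ := hdwdiff.hasDerivAt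
  -- slope argument: deriv w < 0 just to the right of r₀
  have hslope : Tendsto (slope (deriv w) r₀) (𝓝[≠] r₀) (𝓝 (deriv (deriv w) r₀)) :=
    hasDerivAt_iff_tendsto_slope.1 hHD
  have hslope' : ∀ᶠ x in 𝓝[≠] r₀, slope (deriv w) r₀ x < 0 :=
    hslope.eventually (eventually_lt_nhds hw'')
  have hright : ∀ᶠ x in 𝓝[>] r₀, deriv w x < 0 := by
    have h' : ∀ᶠ x in 𝓝[>] r₀, slope (deriv w) r₀ x < 0 :=
      hslope'.filter_mono (nhdsWithin_mono r₀ (fun x hx => ne_of_gt hx))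
    filter_upwards [h', self_mem_nhdsWithin] with x hx hx'
    have hxr : (0:ℝ) < x - r₀ := sub_pos.2 hx'
    rw [slope_def_field, hw'0, sub_zero] at hx
    have h2 := mul_neg_of_neg_of_pos hx hxr
    rwa [div_mul_cancel₀ _ (ne_of_gt hxr)] at h2
  -- extract an interval
  obtain ⟨b, hb, hIoo⟩ := mem_nhdsGT_iff_exists_Ioo_subset.1 hright
  have hbr₀ : r₀ < b := hb
  set b' : ℝ := (r₀ + b) / 2 with hb'
  have hb'1 : r₀ < b' := by simp only [hb']; linarith
  have hb'2 : b' < b := by simp only [hb']; linarith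
  -- w strictly decreasing on [r₀, b']
  have hanti : StrictAntiOn w (Set.Icc r₀ b') := by
    apply strictAntiOn_of_deriv_neg (convex_Icc _ _)
    · exact hwcont.mono (fun x hx => le_trans hr₀gt.le hx.1)
    · intro x hx
      rw [interior_Icc] at hx
      exact hIoo ⟨hx.1, lt_trans hx.2 hb'2⟩
  have hfinal : w b' < w r₀ :=
    hanti ⟨le_refl _, hb'1.le⟩ ⟨hb'1.le, le_refl _⟩ hb'1
  have : w r₀ ≤ w b' := hglob b' (by linarith)
  linarith
end
end

section
/- Let N ∈ {2,3} and p > 1, with additionally p < 3 if N = 3. Let φ : [1,∞) → ℝ be twice continuously differentiable, with φ(r) > 0 for all r ≥ 1, φ(r) → 0 as r → ∞, and φ''(r) + ((N−1)/r) φ'(r) − φ(r)^p = 0 for all r > 1. Then there exist constants c > 0 and C > 0 such that c·r^{−2/(p−1)} ≤ φ(r) ≤ C·r^{−2/(p−1)} for all r ≥ 1. -/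
noncomputable section
open Real Filter Topology Set

lemma second_deriv_nonneg_of_isLocalMin {f : ℝ → ℝ} {a : ℝ}
    (hf : ∀ᶠ x in 𝓝 a, DifferentiableAt ℝ f x)
    (hg : DifferentiableAt ℝ (deriv f) a)
    (h : IsLocalMin f a) : 0 ≤ deriv (deriv f) a := by
  by_contra hneg
  push_neg at hneg
  have h0 : deriv f a = 0 := h.deriv_eq_zero
  have hd : HasDerivWithinAt (deriv f) (deriv (deriv f) a) (Set.Ioi a) a :=
    hg.hasDerivAt.hasDerivWithinAt
  have hslope : Tendsto (slope (deriv f) a) (𝓝[>] a) (𝓝 (deriv (deriv f) a)) := by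
    have := hasDerivWithinAt_iff_tendsto_slope.1 hd
    rwa [Set.diff_singleton_eq_self (by simp)] at this
  have hev : ∀ᶠ x in 𝓝[>] a, slope (deriv f) a x < 0 :=
    hslope.eventually_lt_const hneg
  have hev2 : ∀ᶠ x in 𝓝[>] a, deriv f x < 0 := by
    filter_upwards [hev, self_mem_nhdsWithin] with x hx (hx2 : x ∈ Set.Ioi a)
    rw [slope_def_field, h0, sub_zero] at hx
    have hxa : 0 < x - a := sub_pos.2 hx2
    have := div_neg_iff.1 hx
    rcases this with ⟨h1, h2⟩ | ⟨h1, h2⟩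
    · linarith
    · exact h1
  have hev3 : ∀ᶠ x in 𝓝[>] a,
      deriv f x < 0 ∧ DifferentiableAt ℝ f x ∧ f a ≤ f x := by
    filter_upwards [hev2, (hf.and h).filter_mono nhdsWithin_le_nhds] with x h1 h2
    exact ⟨h1, h2.1, h2.2⟩
  rw [eventually_iff_exists_mem] at hev3
  obtain ⟨s, hs, hsub⟩ := hev3
  obtain ⟨b, hb, hIoo⟩ := mem_nhdsGT_iff_exists_Ioo_subset.1 hs
  have hab : a < b := hb
  set c := (a + b) / 2 with hc
  have hc1 : a < c := by simp only [hc]; linarith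
  have hc2 : c < b := by simp only [hc]; linarith
  have hanti : StrictAntiOn f (Set.Icc a c) := by
    apply strictAntiOn_of_deriv_neg (convex_Icc a c)
    · intro x hx
      rcases eq_or_lt_of_le hx.1 with rfl | hlt
      · exact (hf.self_of_nhds).continuousAt.continuousWithinAt
      · exact ((hsub x (hIoo ⟨hlt, lt_of_le_of_lt hx.2 hc2⟩)).2.1).continuousAt.continuousWithinAt
    · intro x hx
      rw [interior_Icc] at hx
      exact (hsub x (hIoo ⟨hx.1, lt_trans hx.2 hc2⟩)).1
  have hlt : f c < f a := hanti (Set.left_mem_Icc.2 hc1.le) (Set.right_mem_Icc.2 hc1.le) hc1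
  have hge : f a ≤ f c := (hsub c (hIoo ⟨hc1, hc2⟩)).2.2
  linarith

lemma nonneg_of_no_neg_localmin (w : ℝ → ℝ) (hc : ContinuousOn w (Set.Ici 1))
    (h1 : 0 ≤ w 1) (hw : Tendsto w atTop (𝓝 0))
    (hmin : ∀ r, 1 < r → IsLocalMin w r → w r < 0 → False) :
    ∀ r, 1 ≤ r → 0 ≤ w r := by
  by_contra hcon
  push_neg at hcon
  obtain ⟨x0, hx0, hx0n⟩ := hcon
  have hev : ∀ᶠ r in atTop, w x0 / 2 < w r :=
    hw.eventually_const_lt (by linarith)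
  obtain ⟨R0, hR0⟩ := hev.exists_forall_of_atTop
  set R := max R0 (x0 + 1) with hR
  have hx0R : x0 ∈ Set.Icc (1:ℝ) R := ⟨hx0, by
    have : x0 + 1 ≤ R := le_max_right _ _
    linarith⟩
  have h1R : (1:ℝ) ≤ R := le_trans hx0 hx0R.2
  obtain ⟨rs, hrmem, hrmin⟩ := isCompact_Icc.exists_isMinOn ⟨x0, hx0R⟩
    (hc.mono (Set.Icc_subset_Ici_self))
  have hrx0 : w rs ≤ w x0 := hrmin hx0R
  have hrsneg : w rs < 0 := lt_of_le_of_lt hrx0 hx0n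
  have hrs1 : 1 < rs := lt_of_le_of_ne hrmem.1 (by rintro rfl; linarith)
  have hRlarge : ∀ x, R ≤ x → w rs < w x := by
    intro x hx
    have : w x0 / 2 < w x := hR0 x (le_trans (le_max_left _ _) hx)
    linarith
  have hloc : IsLocalMin w rs := by
    have hrsR : rs < R + 1 := by
      have := hrmem.2; linarith
    filter_upwards [Ioo_mem_nhds (lt_of_lt_of_le zero_lt_one hrmem.1 |> fun _ => hrs1) hrsR] with x hx
    rcases le_or_gt x R with hxR | hxR
    · exact hrmin ⟨hx.1.le, hxR⟩
    · exact (hRlarge x hxR.le).le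
  exact hmin rs hrs1 hloc hrsneg

lemma crit_second {N : ℕ} {p : ℝ} (α : ℝ) {φ : ℝ → ℝ}
    (hφd : ∀ x > (1:ℝ), DifferentiableAt ℝ φ x)
    (hφd2 : ∀ x > (1:ℝ), DifferentiableAt ℝ (deriv φ) x)
    (hode : ∀ r > (1:ℝ),
      deriv (deriv φ) r + ((N - 1 : ℝ) / r) * deriv φ r - φ r ^ p = 0)
    (s a r : ℝ) (hr : 1 < r) :
    (∀ᶠ x in 𝓝 r, DifferentiableAt ℝ (fun x => s * φ x - a * x ^ (-α)) x) ∧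
    DifferentiableAt ℝ (deriv (fun x => s * φ x - a * x ^ (-α))) r ∧
    (deriv (fun x => s * φ x - a * x ^ (-α)) r = 0 →
      deriv (deriv (fun x => s * φ x - a * x ^ (-α))) r
        = s * φ r ^ p - a * (α * (α + 2 - N)) * r ^ (-α - 2)) := by
  have hr0 : (0:ℝ) < r := by linarith
  set u := fun x : ℝ => s * φ x - a * x ^ (-α) with hu
  set u' := fun x : ℝ => s * deriv φ x + a * α * x ^ (-α - 1) with hu'
  have hud : ∀ x, 1 < x → HasDerivAt u (u' x) x := by
    intro x hx
    have hx0 : x ≠ 0 := by positivity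
    have h1 : HasDerivAt (fun y : ℝ => y ^ (-α)) (-α * x ^ (-α - 1)) x :=
      Real.hasDerivAt_rpow_const (Or.inl hx0)
    have h2 := ((hφd x hx).hasDerivAt.const_mul s).sub (h1.const_mul a)
    refine h2.congr_deriv ?_
    simp only [hu']; ring
  have hev : deriv u =ᶠ[𝓝 r] u' := by
    filter_upwards [isOpen_Ioi.mem_nhds hr] with x hx
    exact (hud x hx).deriv
  have hu'd : HasDerivAt u'
      (s * deriv (deriv φ) r + a * α * ((-α - 1) * r ^ (-α - 1 - 1))) r := by
    have h1 : HasDerivAt (fun y : ℝ => y ^ (-α - 1)) ((-α - 1) * r ^ (-α - 1 - 1)) r :=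
      Real.hasDerivAt_rpow_const (Or.inl hr0.ne')
    exact ((hφd2 r hr).hasDerivAt.const_mul s).add (h1.const_mul (a * α))
  refine ⟨?_, ?_, ?_⟩
  · filter_upwards [isOpen_Ioi.mem_nhds hr] with x hx
    exact (hud x hx).differentiableAt
  · exact (hev.differentiableAt_iff).2 hu'd.differentiableAt
  · intro hcrit
    have hcrit' : u' r = 0 := by rw [← (hud r hr).deriv]; exact hcrit
    have hdd : deriv (deriv u) r = deriv u' r := hev.deriv_eq
    have hoder := hode r hr
    have e1 : r ^ (-α - 1 - 1) = r ^ (-α - 2) := by rw [show -α - 1 - 1 = -α - 2 by ring]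
    have e3 : ((N:ℝ) - 1) / r * r ^ (-α - 1) = ((N:ℝ) - 1) * r ^ (-α - 2) := by
      rw [show -α - 2 = (-α - 1) + (-1) by ring, Real.rpow_add hr0, Real.rpow_neg_one]
      field_simp
    have hcrit'' : s * deriv φ r = -(a * α * r ^ (-α - 1)) := by
      simp only [hu'] at hcrit'; linarith
    have hφ2 : deriv (deriv φ) r = φ r ^ p - ((N - 1 : ℝ) / r) * deriv φ r := by linarith
    rw [hdd, hu'd.deriv, e1, hφ2]
    linear_combination (-(((N:ℝ) - 1) / r)) * hcrit'' + (a * α) * e3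

/-- sharp power-law decay: a positive C² solution of the zero-mass
radial ODE `φ'' + ((N−1)/r)φ' − φ^p = 0` on `(1,∞)` vanishing at infinity satisfies
`c r^{−2/(p−1)} ≤ φ(r) ≤ C r^{−2/(p−1)}` on `[1,∞)` for some `c, C > 0`. -/
theorem radial_decay_estimate (N : ℕ) (hN : N = 2 ∨ N = 3)
    (p : ℝ) (hp : 1 < p) (hp3 : N = 3 → p < 3)
    (φ : ℝ → ℝ)
    (hC2 : ContDiffOn ℝ 2 φ (Set.Ici (1 : ℝ)))
    (hpos : ∀ r ≥ (1:ℝ), 0 < φ r)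
    (hlim : Tendsto φ atTop (𝓝 0))
    (hode : ∀ r > (1:ℝ),
      deriv (deriv φ) r + ((N - 1 : ℝ) / r) * deriv φ r - φ r ^ p = 0) :
    ∃ c > (0:ℝ), ∃ C > (0:ℝ), ∀ r ≥ (1:ℝ),
      c * r ^ (-(2 / (p - 1))) ≤ φ r ∧ φ r ≤ C * r ^ (-(2 / (p - 1))) := by
  have hp1 : (0:ℝ) < p - 1 := by linarith
  set α := 2 / (p - 1) with hαdef
  have hα : 0 < α := by positivity
  have hαp : α * (p - 1) = 2 := by rw [hαdef]; field_simp
  have hβpos : 0 < α * (α + 2 - (N:ℝ)) := by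
    rcases hN with h2 | h3
    · subst h2; push_cast; nlinarith
    · subst h3
      have h3' := hp3 rfl
      have hα1 : 1 < α := by
        rw [hαdef, lt_div_iff₀ hp1]; linarith
      push_cast; nlinarith
  set β := α * (α + 2 - (N:ℝ)) with hβdef
  set l := β ^ (1 / (p - 1)) with hldef
  have hl : 0 < l := Real.rpow_pos_of_pos hβpos _
  have hlβ : l ^ (p - 1) = β := by
    rw [hldef, ← Real.rpow_mul hβpos.le, one_div, inv_mul_cancel₀ hp1.ne', Real.rpow_one]
  have hψp : ∀ r : ℝ, 0 < r → (l * r ^ (-α)) ^ p = l * β * r ^ (-α - 2) := by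
    intro r hr
    rw [Real.mul_rpow hl.le (Real.rpow_pos_of_pos hr _).le,
      ← Real.rpow_mul hr.le (-α) p]
    have hexp : -α * p = -α - 2 := by nlinarith
    have hlp : l ^ p = l * β := by
      rw [show p = 1 + (p - 1) by ring, Real.rpow_add hl, Real.rpow_one, hlβ]
    rw [hexp, hlp]
  have hφd : ∀ x > (1:ℝ), DifferentiableAt ℝ φ x := fun x hx =>
    ((hC2.mono Set.Ioi_subset_Ici_self).contDiffAt
      (isOpen_Ioi.mem_nhds hx)).differentiableAt (by norm_num)
  have hφC1' : ContDiffOn ℝ 1 (deriv φ) (Set.Ioi 1) :=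
    (hC2.mono Set.Ioi_subset_Ici_self).deriv_of_isOpen isOpen_Ioi (by norm_num)
  have hφd2 : ∀ x > (1:ℝ), DifferentiableAt ℝ (deriv φ) x := fun x hx =>
    (hφC1'.contDiffAt (isOpen_Ioi.mem_nhds hx)).differentiableAt (by norm_num)
  have hcontψ : ContinuousOn (fun r : ℝ => r ^ (-α)) (Set.Ici 1) := fun r hr =>
    (Real.continuousAt_rpow_const r (-α)
      (Or.inl (by have : (1:ℝ) ≤ r := hr; positivity))).continuousWithinAt
  have hφ1 : 0 < φ 1 := hpos 1 le_rfl
  set ε := min 1 (φ 1 / l) with hεdef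
  have hεpos : 0 < ε := lt_min one_pos (div_pos hφ1 hl)
  have hε1 : ε ≤ 1 := min_le_left _ _
  have hεl : ε * l ≤ φ 1 := by
    have h := min_le_right 1 (φ 1 / l)
    calc ε * l ≤ (φ 1 / l) * l := by
          apply mul_le_mul_of_nonneg_right h hl.le
      _ = φ 1 := div_mul_cancel₀ _ hl.ne'
  set K := max 1 (φ 1 / l) with hKdef
  have hK1 : (1:ℝ) ≤ K := le_max_left _ _
  have hKl : φ 1 ≤ K * l := by
    have h := le_max_right 1 (φ 1 / l)
    calc φ 1 = (φ 1 / l) * l := (div_mul_cancel₀ _ hl.ne').symm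
      _ ≤ K * l := mul_le_mul_of_nonneg_right h hl.le
  clear_value α β l ε K
  -- lower bound
  have hlow : ∀ r, 1 ≤ r → 0 ≤ 1 * φ r - (ε * l) * r ^ (-α) := by
    apply nonneg_of_no_neg_localmin
    · exact (continuousOn_const.mul hC2.continuousOn).sub (continuousOn_const.mul hcontψ)
    · simp only [Real.one_rpow]; linarith
    · have h := (hlim.const_mul (1:ℝ)).sub ((tendsto_rpow_neg_atTop hα).const_mul (ε * l))
      simpa using h
    · intro r hr hloc hneg
      have hr0 : (0:ℝ) < r := by linarith
      obtain ⟨hf, hg, hcc⟩ := crit_second α hφd hφd2 hode 1 (ε * l) r hr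
      have h2nd := second_deriv_nonneg_of_isLocalMin hf hg hloc
      rw [hcc hloc.deriv_eq_zero, ← hβdef] at h2nd
      have hψr : 0 < l * r ^ (-α) := mul_pos hl (Real.rpow_pos_of_pos hr0 _)
      have hφr : φ r < ε * (l * r ^ (-α)) := by linarith [hneg]
      have h1 : φ r ^ p < (ε * (l * r ^ (-α))) ^ p :=
        Real.rpow_lt_rpow (hpos r hr.le).le hφr (by linarith)
      have h2 : (ε * (l * r ^ (-α))) ^ p = ε ^ p * (l * r ^ (-α)) ^ p :=
        Real.mul_rpow hεpos.le hψr.le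
      have h3 : ε ^ p ≤ ε := by
        have := Real.rpow_le_rpow_of_exponent_ge hεpos hε1 hp.le
        rwa [Real.rpow_one] at this
      have h4 : ε ^ p * (l * r ^ (-α)) ^ p ≤ ε * (l * r ^ (-α)) ^ p :=
        mul_le_mul_of_nonneg_right h3 (Real.rpow_pos_of_pos hψr p).le
      have h5 : (l * r ^ (-α)) ^ p = l * β * r ^ (-α - 2) := hψp r hr0
      rw [h5] at h4
      rw [h2] at h1
      rw [h5] at h1
      linarith [h1, h4, h2nd]
  -- upper bound
  have hup : ∀ r, 1 ≤ r → 0 ≤ (-1) * φ r - (-(K * l)) * r ^ (-α) := by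
    apply nonneg_of_no_neg_localmin
    · exact (continuousOn_const.mul hC2.continuousOn).sub (continuousOn_const.mul hcontψ)
    · simp only [Real.one_rpow]; linarith
    · have h := (hlim.const_mul (-1:ℝ)).sub ((tendsto_rpow_neg_atTop hα).const_mul (-(K * l)))
      simpa using h
    · intro r hr hloc hneg
      have hr0 : (0:ℝ) < r := by linarith
      obtain ⟨hf, hg, hcc⟩ := crit_second α hφd hφd2 hode (-1) (-(K * l)) r hr
      have h2nd := second_deriv_nonneg_of_isLocalMin hf hg hloc
      rw [hcc hloc.deriv_eq_zero, ← hβdef] at h2nd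
      have hψr : 0 < l * r ^ (-α) := mul_pos hl (Real.rpow_pos_of_pos hr0 _)
      have hφr : K * (l * r ^ (-α)) < φ r := by linarith [hneg]
      have h1 : (K * (l * r ^ (-α))) ^ p < φ r ^ p :=
        Real.rpow_lt_rpow (mul_pos (lt_of_lt_of_le one_pos hK1) hψr).le hφr (by linarith)
      have h2 : (K * (l * r ^ (-α))) ^ p = K ^ p * (l * r ^ (-α)) ^ p :=
        Real.mul_rpow (by linarith) hψr.le
      have h3 : K ≤ K ^ p := by
        have := Real.rpow_le_rpow_of_exponent_le hK1 hp.le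
        rwa [Real.rpow_one] at this
      have h4 : K * (l * r ^ (-α)) ^ p ≤ K ^ p * (l * r ^ (-α)) ^ p :=
        mul_le_mul_of_nonneg_right h3 (Real.rpow_pos_of_pos hψr p).le
      have h5 : (l * r ^ (-α)) ^ p = l * β * r ^ (-α - 2) := hψp r hr0
      rw [h5] at h4
      rw [h2] at h1
      rw [h5] at h1
      linarith [h1, h4, h2nd]
  refine ⟨ε * l, mul_pos hεpos hl, K * l, mul_pos (lt_of_lt_of_le one_pos hK1) hl, fun r hr => ?_⟩
  have hl' := hlow r hr
  have hu' := hup r hr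
  constructor
  · linarith
  · linarith
end
end
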